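/- arXiv:2208.07052 — 4 statements merged into one kernel-verified Lean document; each statement's English description precedes it below -/
import Mathlib

section
/- For each integer n ≥ 2, each T ∈ (0,∞), and any nonnegative initial data (w_i^0)_{i=1}^n, the truncated finite-dimensional system of ordinary differential equations d/dt w_i^n = (1/2) ∑_{j=1}^{i-1} p_{j,i-j} a_{j,i-j} w_j^n w_{i-j}^n − ∑_{j=1}^{n−i} a_{i,j} w_i^n w_j^n + (1/2) ∑_{j=i+1}^{n} ∑_{k=1}^{j-1} N_{j−k,k}^i (1 − p_{j−k,k}) a_{j−k,k} w_{j−k}^n w_k^n, with w_i^n(0) = w_i^0 for i ∈ {1,…,n}, has a unique continuously differentiable solution w^n = (w_1^n,…,w_n^n) : [0,T] → ℝ^n, and this solution has nonnegative components. -/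
/-!
The right-hand side is a quadratic polynomial in `w`, hence locally Lipschitz, which gives
uniqueness. For existence on all of `[0, T]`, evaluate the field at the clamp of the state to the
box `[0, M]ⁿ`, where `M = ∑ i w_i(0)` is the initial mass: the clamped field is globally Lipschitz
and bounded, so Picard-Lindelöf applies. Along its solution every component stays nonnegative,
since where `w_i = 0` only gain terms remain in the `i`-th equation, and the mass `∑ i w_i` is
conserved, since each collision, coalescing or fragmenting, conserves mass (`a` is symmetric and
`∑ s N^s_{i,j} = i + j`). Hence every component stays below `M`, the clamp does nothing, and the
clamped solution solves the original system.
-/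

/-- The right-hand side of the truncated discrete coagulation equations with
collisional breakage, for cluster size `i` in the `n`-truncated system, evaluated
at a configuration `w : ℕ → ℝ`. -/
noncomputable def truncRHS (a p : ℕ → ℕ → ℝ) (N : ℕ → ℕ → ℕ → ℝ) (n i : ℕ)
    (w : ℕ → ℝ) : ℝ :=
    (1/2) * ∑ j ∈ Finset.Icc 1 (i-1), p j (i-j) * a j (i-j) * w j * w (i-j)
  - ∑ j ∈ Finset.Icc 1 (n-i), a i j * w i * w j
  + (1/2) * ∑ j ∈ Finset.Icc (i+1) n, ∑ k ∈ Finset.Icc 1 (j-1),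
      N (j-k) k i * (1 - p (j-k) k) * a (j-k) k * w (j-k) * w k

namespace Finset

variable {M : Type*} [AddCommMonoid M]

theorem sum_Icc_sum_Icc_sub_comm (n : ℕ) (g : ℕ → ℕ → M) :
    ∑ i ∈ Icc 1 n, ∑ j ∈ Icc 1 (n - i), g i j = ∑ i ∈ Icc 1 n, ∑ j ∈ Icc 1 (n - i), g j i :=
  sum_comm' fun i j => by simp only [mem_Icc]; omega

theorem sum_Icc_sum_Icc_sub_one_eq_sum_add (n : ℕ) (g : ℕ → ℕ → M) :
    ∑ m ∈ Icc 1 n, ∑ j ∈ Icc 1 (m - 1), g m j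
      = ∑ i ∈ Icc 1 n, ∑ j ∈ Icc 1 (n - i), g (i + j) i := by
  rw [sum_comm' (t' := Icc 1 n) (s' := fun j => Icc (j + 1) n)
    fun m j => by simp only [mem_Icc]; omega]
  refine sum_congr rfl fun i hi => ?_
  rw [← Nat.add_sub_cancel' (mem_Icc.1 hi).2, Nat.add_sub_cancel_left, ← map_add_left_Icc, sum_map]
  rfl

theorem sum_Icc_sum_Icc_add_one_sum_comm (n : ℕ) (f : ℕ → ℕ → ℕ → M) :
    ∑ i ∈ Icc 1 n, ∑ j ∈ Icc (i + 1) n, ∑ k ∈ Icc 1 (j - 1), f i j k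
      = ∑ j ∈ Icc 1 n, ∑ k ∈ Icc 1 (j - 1), ∑ i ∈ Icc 1 (j - 1), f i j k := by
  rw [sum_comm' (t' := Icc 1 n) (s' := fun j => Icc 1 (j - 1))
    fun i j => by simp only [mem_Icc]; omega]
  exact sum_congr rfl fun j _ => sum_comm

end Finset

open Finset in
theorem sum_mul_sum_fragments_eq {N : ℕ → ℕ → ℕ → ℝ}
    (hN_mass : ∀ i j, 1 ≤ i → 1 ≤ j →
      ∑ s ∈ Finset.Icc 1 (i+j-1), (Nat.cast s : ℝ) * N i j s = (i : ℝ) + (j : ℝ))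
    (n : ℕ) (c : ℕ → ℕ → ℝ) :
    ∑ i ∈ Icc 1 n, (i : ℝ) * ∑ j ∈ Icc (i + 1) n, ∑ k ∈ Icc 1 (j - 1), N (j - k) k i * c (j - k) k
      = ∑ i ∈ Icc 1 n, ∑ j ∈ Icc 1 (n - i), (i + j : ℝ) * c i j := by
  have fragment_mass : ∀ j ∈ Icc 1 n, ∀ k ∈ Icc 1 (j - 1),
      ∑ i ∈ Icc 1 (j - 1), (i : ℝ) * (N (j - k) k i * c (j - k) k) = j * c (j - k) k := by
    intro j hj k hk
    simp only [mem_Icc] at hj hk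
    have := hN_mass (j - k) k (by omega) hk.1
    rw [Nat.sub_add_cancel (by omega), Nat.cast_sub (by omega), sub_add_cancel] at this
    simp only [← this, sum_mul, mul_assoc]
  simp only [mul_sum]
  rw [sum_Icc_sum_Icc_add_one_sum_comm,
    sum_congr rfl fun j hj => sum_congr rfl fun k hk => fragment_mass j hj k hk,
    sum_Icc_sum_Icc_sub_one_eq_sum_add, sum_Icc_sum_Icc_sub_comm]
  simp [add_comm]

open Finset in
theorem sum_mul_truncRHS_eq_zero {a p : ℕ → ℕ → ℝ} {N : ℕ → ℕ → ℕ → ℝ}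
    (ha_symm : ∀ i j, a i j = a j i)
    (hN_mass : ∀ i j, 1 ≤ i → 1 ≤ j →
      ∑ s ∈ Finset.Icc 1 (i+j-1), (Nat.cast s : ℝ) * N i j s = (i : ℝ) + (j : ℝ))
    (n : ℕ) (x : ℕ → ℝ) :
    ∑ i ∈ Icc 1 n, (i : ℝ) * truncRHS a p N n i x = 0 := by
  set gain : ℕ → ℝ := fun i => ∑ j ∈ Icc 1 (i - 1), p j (i - j) * a j (i - j) * x j * x (i - j)
  set loss : ℕ → ℝ := fun i => ∑ j ∈ Icc 1 (n - i), a i j * x i * x j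
  set breakage : ℕ → ℝ := fun i => ∑ j ∈ Icc (i + 1) n, ∑ k ∈ Icc 1 (j - 1),
    N (j - k) k i * (1 - p (j - k) k) * a (j - k) k * x (j - k) * x k
  set pairSum : (ℕ → ℕ → ℝ) → ℝ := fun g => ∑ i ∈ Icc 1 n, ∑ j ∈ Icc 1 (n - i), g i j
  have hgain : ∑ i ∈ Icc 1 n, (i : ℝ) * gain i
      = pairSum fun i j => (i + j) * (p i j * a i j * x i * x j) := by
    simp only [gain, mul_sum, pairSum]
    rw [sum_Icc_sum_Icc_sub_one_eq_sum_add]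
    simp
  have hloss : 2 * ∑ i ∈ Icc 1 n, (i : ℝ) * loss i
      = pairSum fun i j => (i + j) * (a i j * x i * x j) := by
    rw [two_mul]
    simp only [loss, mul_sum, pairSum]
    nth_rw 2 [sum_Icc_sum_Icc_sub_comm]
    simp only [← sum_add_distrib, ha_symm]
    exact sum_congr rfl fun i _ => sum_congr rfl fun j _ => by ring
  have hbreakage : ∑ i ∈ Icc 1 n, (i : ℝ) * breakage i
      = pairSum fun i j => (i + j) * ((1 - p i j) * a i j * x i * x j) := by
    simp only [breakage, pairSum, mul_assoc]
    exact sum_mul_sum_fragments_eq hN_mass n fun u k => (1 - p u k) * (a u k * (x u * x k))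
  have hgain_add_breakage : (pairSum fun i j => (i + j) * (p i j * a i j * x i * x j))
      + (pairSum fun i j => (i + j) * ((1 - p i j) * a i j * x i * x j))
      = pairSum fun i j => (i + j) * (a i j * x i * x j) := by
    simp only [pairSum, ← sum_add_distrib]
    exact sum_congr rfl fun i _ => sum_congr rfl fun j _ => by ring
  have htrunc : ∀ i, truncRHS a p N n i x = 1 / 2 * gain i - loss i + 1 / 2 * breakage i :=
    fun i => rfl
  simp only [htrunc, mul_add, mul_sub, sum_add_distrib, sum_sub_distrib,
    mul_left_comm _ (1 / 2 : ℝ), ← mul_sum]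
  linarith

open Set Metric
open scoped NNReal

section truncRHS

variable {a p : ℕ → ℕ → ℝ} {N : ℕ → ℕ → ℕ → ℝ} {n i : ℕ}

theorem truncRHS_congr (hi : i ∈ Finset.Icc 1 n) {x y : ℕ → ℝ}
    (hxy : ∀ j ∈ Finset.Icc 1 n, x j = y j) : truncRHS a p N n i x = truncRHS a p N n i y := by
  simp only [Finset.mem_Icc] at hi hxy
  have gain : ∑ j ∈ Finset.Icc 1 (i - 1), p j (i - j) * a j (i - j) * x j * x (i - j)
      = ∑ j ∈ Finset.Icc 1 (i - 1), p j (i - j) * a j (i - j) * y j * y (i - j) :=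
    Finset.sum_congr rfl fun j hj => by
      rw [Finset.mem_Icc] at hj
      rw [hxy j (by omega), hxy (i - j) (by omega)]
  have loss : ∑ j ∈ Finset.Icc 1 (n - i), a i j * x i * x j
      = ∑ j ∈ Finset.Icc 1 (n - i), a i j * y i * y j :=
    Finset.sum_congr rfl fun j hj => by
      rw [Finset.mem_Icc] at hj
      rw [hxy i hi, hxy j (by omega)]
  have breakage : ∑ j ∈ Finset.Icc (i + 1) n, ∑ k ∈ Finset.Icc 1 (j - 1),
        N (j - k) k i * (1 - p (j - k) k) * a (j - k) k * x (j - k) * x k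
      = ∑ j ∈ Finset.Icc (i + 1) n, ∑ k ∈ Finset.Icc 1 (j - 1),
        N (j - k) k i * (1 - p (j - k) k) * a (j - k) k * y (j - k) * y k :=
    Finset.sum_congr rfl fun j hj => Finset.sum_congr rfl fun k hk => by
      rw [Finset.mem_Icc] at hj hk
      rw [hxy (j - k) (by omega), hxy k (by omega)]
  rw [truncRHS, truncRHS, gain, loss, breakage]

theorem truncRHS_nonneg_of_eq_zero (ha : ∀ i j, 0 ≤ a i j) (hp_nonneg : ∀ i j, 0 ≤ p i j)
    (hp_le : ∀ i j, p i j ≤ 1) (hN : ∀ i j s, 0 ≤ N i j s) (hi : i ∈ Finset.Icc 1 n)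
    {x : ℕ → ℝ} (hx : ∀ j ∈ Finset.Icc 1 n, 0 ≤ x j) (hxi : x i = 0) :
    0 ≤ truncRHS a p N n i x := by
  simp only [Finset.mem_Icc] at hi hx
  have gain : 0 ≤ ∑ j ∈ Finset.Icc 1 (i - 1), p j (i - j) * a j (i - j) * x j * x (i - j) :=
    Finset.sum_nonneg fun j hj => by
      rw [Finset.mem_Icc] at hj
      have := hp_nonneg j (i - j); have := ha j (i - j)
      have := hx j (by omega); have := hx (i - j) (by omega)
      positivity
  have loss : ∑ j ∈ Finset.Icc 1 (n - i), a i j * x i * x j = 0 :=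
    Finset.sum_eq_zero fun j _ => by rw [hxi, mul_zero, zero_mul]
  have breakage : 0 ≤ ∑ j ∈ Finset.Icc (i + 1) n, ∑ k ∈ Finset.Icc 1 (j - 1),
      N (j - k) k i * (1 - p (j - k) k) * a (j - k) k * x (j - k) * x k :=
    Finset.sum_nonneg fun j hj => Finset.sum_nonneg fun k hk => by
      rw [Finset.mem_Icc] at hj hk
      have := hN (j - k) k i; have := sub_nonneg.2 (hp_le (j - k) k); have := ha (j - k) k
      have := hx (j - k) (by omega); have := hx k (by omega)
      positivity
  rw [truncRHS, loss]
  linarith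

end truncRHS

section ODE

variable {E : Type*} [NormedAddCommGroup E] [NormedSpace ℝ E]

theorem HasDerivWithinAt.Ici_of_Icc {f : ℝ → E} {f' : E} {a b t : ℝ} (ht : t ∈ Ico a b)
    (hf : HasDerivWithinAt f f' (Icc a b) t) : HasDerivWithinAt f f' (Ici t) t :=
  hf.mono_of_mem_nhdsWithin <|
    Filter.mem_of_superset (Icc_mem_nhdsGE ht.2) (Icc_subset_Icc_left ht.1)

theorem exists_forall_mem_Icc_hasDerivWithinAt_of_lipschitzWith [CompleteSpace E] {G : E → E}
    {K L : ℝ≥0} (hG : LipschitzWith K G) (hL : ∀ x, ‖G x‖ ≤ L) (x₀ : E) {T : ℝ} (hT : 0 ≤ T) :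
    ∃ α : ℝ → E, α 0 = x₀ ∧ ∀ t ∈ Icc 0 T, HasDerivWithinAt α (G (α t)) (Icc 0 T) t :=
  -- a global bound lets the Picard-Lindelöf ball be as large as the time interval requires
  (IsPicardLindelof.of_time_independent (tmin := 0) (tmax := T) (t₀ := ⟨0, le_rfl, hT⟩)
    (a := L * T.toNNReal) (r := 0) (fun x _ => hL x) hG.lipschitzOnWith
    (by simp [max_eq_left hT, Real.coe_toNNReal _ hT])).exists_eq_forall_mem_Icc_hasDerivWithinAt₀

theorem exists_forall_mem_Icc_hasDerivWithinAt_comp [CompleteSpace E] {F ρ : E → E}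
    (hF : ContDiff ℝ 1 F) {K : ℝ≥0} (hρ : LipschitzWith K ρ) {S : Set E} (hS : IsCompact S)
    (hρS : ∀ x, ρ x ∈ S) (x₀ : E) {T : ℝ} (hT : 0 ≤ T) :
    ∃ α : ℝ → E, α 0 = x₀ ∧ ∀ t ∈ Icc 0 T, HasDerivWithinAt α (F (ρ (α t))) (Icc 0 T) t := by
  obtain ⟨KF, hKF⟩ := hF.locallyLipschitz.locallyLipschitzOn.exists_lipschitzOnWith_of_compact hS
  obtain ⟨L, hL⟩ := hS.exists_bound_of_continuousOn hF.continuous.continuousOn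
  exact exists_forall_mem_Icc_hasDerivWithinAt_of_lipschitzWith
    (lipschitzOnWith_univ.1 (hKF.comp hρ.lipschitzOnWith fun x _ => hρS x))
    (L := L.toNNReal) (fun x => (hL _ (hρS x)).trans (Real.le_coe_toNNReal L)) x₀ hT

theorem eqOn_Icc_of_hasDerivWithinAt_of_contDiff {F : E → E} (hF : ContDiff ℝ 1 F)
    {u v : ℝ → E} {T : ℝ}
    (hu : ∀ t ∈ Icc 0 T, HasDerivWithinAt u (F (u t)) (Icc 0 T) t)
    (hv : ∀ t ∈ Icc 0 T, HasDerivWithinAt v (F (v t)) (Icc 0 T) t) (h0 : u 0 = v 0) :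
    EqOn u v (Icc 0 T) := by
  have hu_cont : ContinuousOn u (Icc 0 T) := HasDerivWithinAt.continuousOn hu
  have hv_cont : ContinuousOn v (Icc 0 T) := HasDerivWithinAt.continuousOn hv
  set S := u '' Icc 0 T ∪ v '' Icc 0 T
  obtain ⟨K, hK⟩ := hF.locallyLipschitz.locallyLipschitzOn.exists_lipschitzOnWith_of_compact
    ((isCompact_Icc.image_of_continuousOn hu_cont).union
      (isCompact_Icc.image_of_continuousOn hv_cont))
  exact ODE_solution_unique_of_mem_Icc_right (s := fun _ => S) (fun _ _ => hK)
    hu_cont (fun t ht => (hu t (Ico_subset_Icc_self ht)).Ici_of_Icc ht)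
    (fun t ht => Or.inl (mem_image_of_mem u (Ico_subset_Icc_self ht)))
    hv_cont (fun t ht => (hv t (Ico_subset_Icc_self ht)).Ici_of_Icc ht)
    (fun t ht => Or.inr (mem_image_of_mem v (Ico_subset_Icc_self ht))) h0

theorem contDiffOn_Icc_of_hasDerivWithinAt_of_contDiff [CompleteSpace E] {F : E → E}
    (hF : ContDiff ℝ 1 F) {u : ℝ → E} {T : ℝ}
    (hu : ∀ t ∈ Icc 0 T, HasDerivWithinAt u (F (u t)) (Icc 0 T) t) :
    ContDiffOn ℝ 1 u (Icc 0 T) :=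
  ODE.contDiffOn_enat_Icc_of_hasDerivWithinAt (f := fun _ => F) (u := univ) (n := 1)
    (hF.comp contDiff_snd).contDiffOn hu (mapsTo_univ _ _)

theorem nonneg_of_deriv_nonneg_of_neg {g g' : ℝ → ℝ} {a b : ℝ}
    (hg : ∀ t ∈ Icc a b, HasDerivWithinAt g (g' t) (Icc a b) t) (ha : 0 ≤ g a)
    (hg' : ∀ t ∈ Ico a b, g t < 0 → 0 ≤ g' t) : ∀ t ∈ Icc a b, 0 ≤ g t := by
  intro t ht
  refine neg_nonpos.1 <| le_of_forall_pos_le_add fun ε hε => ?_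
  have hba : 0 < b - a + 1 := by linarith [ht.1.trans ht.2]
  set c := ε / (b - a + 1)
  have hc : 0 < c := div_pos hε hba
  -- `-g` stays below the barrier `c * (s - a + 1)`, which it could only cross where `g < 0`
  have barrier := image_le_of_deriv_right_lt_deriv_boundary (f := fun s => -g s)
    (f' := fun s => -g' s) (B := fun s => c * (s - a + 1)) (B' := fun _ => c)
    (fun s hs => (hg s hs).continuousWithinAt.neg)
    (fun s hs => (hg s (Ico_subset_Icc_self hs)).neg.Ici_of_Icc hs)
    (by linarith)
    (fun s => by simpa using (((hasDerivAt_id s).sub_const a).add_const 1).const_mul c)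
    (fun s hs hgs => by
      have : g s < 0 := by nlinarith [hs.1]
      linarith [hg' s hs this]) ht
  calc -g t ≤ c * (t - a + 1) := barrier
    _ ≤ c * (b - a + 1) := by gcongr; exact ht.2
    _ = 0 + ε := by rw [zero_add, div_mul_cancel₀ _ hba.ne']

end ODE

def boxClamp {ι : Type*} (R : ℝ) (y : ι → ℝ) : ι → ℝ := fun i => max 0 (min (y i) R)

section boxClamp

variable {ι : Type*} {R : ℝ} {y : ι → ℝ}

theorem lipschitzWith_boxClamp [Fintype ι] (R : ℝ) : LipschitzWith 1 (boxClamp (ι := ι) R) :=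
  LipschitzWith.of_dist_le_mul fun y z => by
    rw [NNReal.coe_one, one_mul, dist_pi_le_iff dist_nonneg]
    exact fun i => (((LipschitzWith.id.min_const R).const_max 0).dist_le_mul (y i) (z i)).trans
      (by simpa using dist_le_pi_dist y z i)

theorem boxClamp_nonneg : 0 ≤ boxClamp R y := fun _ => le_max_left _ _

theorem boxClamp_mem_closedBall [Fintype ι] (hR : 0 ≤ R) (y : ι → ℝ) :
    boxClamp R y ∈ closedBall 0 R := by
  rw [mem_closedBall_zero_iff, pi_norm_le_iff_of_nonneg hR]
  intro i
  rw [Real.norm_eq_abs, abs_le]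
  exact ⟨(neg_nonpos.2 hR).trans (le_max_left _ _), max_le hR (min_le_right _ _)⟩

theorem boxClamp_apply_of_nonpos {i : ι} (hi : y i ≤ 0) : boxClamp R y i = 0 :=
  max_eq_left ((min_le_left _ _).trans hi)

theorem boxClamp_of_nonneg_of_le (h0 : 0 ≤ y) (hR : ∀ i, y i ≤ R) : boxClamp R y = y :=
  funext fun i => by
    rw [boxClamp, min_eq_left (hR i), max_eq_right (show (0 : ℝ) ≤ y i from h0 i)]

end boxClamp

namespace TruncatedSystem

variable {a p : ℕ → ℕ → ℝ} {N : ℕ → ℕ → ℕ → ℝ} {n : ℕ}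

variable (a p N n) in
/-- `truncRHS` only reads the sizes `1, …, n`, so extending a state by zero loses nothing. -/
noncomputable def field (y : Finset.Icc 1 n → ℝ) : Finset.Icc 1 n → ℝ :=
  fun i => truncRHS a p N n i (Function.extend Subtype.val y 0)

variable (n) in
noncomputable def mass (y : Finset.Icc 1 n → ℝ) : ℝ := ∑ i : Finset.Icc 1 n, ((i : ℕ) : ℝ) * y i

theorem field_restrict (x : ℕ → ℝ) (i : Finset.Icc 1 n) :
    field a p N n ((Finset.Icc 1 n).restrict x) i = truncRHS a p N n i x :=
  truncRHS_congr i.2 fun j hj =>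
    Subtype.val_injective.extend_apply ((Finset.Icc 1 n).restrict x) 0 ⟨j, hj⟩

theorem contDiff_extend_val_apply {k : WithTop ℕ∞} (j : ℕ) :
    ContDiff ℝ k fun y : Finset.Icc 1 n → ℝ => Function.extend Subtype.val y 0 j := by
  by_cases hj : j ∈ Finset.Icc 1 n
  · have (y : Finset.Icc 1 n → ℝ) : Function.extend Subtype.val y 0 j = y ⟨j, hj⟩ :=
      Subtype.val_injective.extend_apply y 0 ⟨j, hj⟩
    simpa only [this] using contDiff_apply ℝ ℝ (⟨j, hj⟩ : Finset.Icc 1 n)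
  · have (y : Finset.Icc 1 n → ℝ) : Function.extend Subtype.val y 0 j = 0 :=
      Function.extend_apply' _ _ _ fun ⟨i, hi⟩ => hj (hi ▸ i.2)
    simpa only [this] using contDiff_const

theorem contDiff_field : ContDiff ℝ 1 (field a p N n) :=
  contDiff_pi.2 fun i => by
    have := contDiff_extend_val_apply (n := n) (k := 1)
    unfold field truncRHS
    fun_prop

theorem hasDerivWithinAt_restrict_iff {v : ℕ → ℝ → ℝ} {s : Set ℝ} {t : ℝ} :
    HasDerivWithinAt (fun t => (Finset.Icc 1 n).restrict fun j => v j t)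
      (field a p N n ((Finset.Icc 1 n).restrict fun j => v j t)) s t ↔
      ∀ i ∈ Finset.Icc 1 n, HasDerivWithinAt (v i) (truncRHS a p N n i fun j => v j t) s t := by
  rw [hasDerivWithinAt_pi, Subtype.forall]
  simp only [field_restrict]
  rfl

theorem field_nonneg_of_eq_zero (ha : ∀ i j, 0 ≤ a i j) (hp_nonneg : ∀ i j, 0 ≤ p i j)
    (hp_le : ∀ i j, p i j ≤ 1) (hN : ∀ i j s, 0 ≤ N i j s) {y : Finset.Icc 1 n → ℝ}
    (hy : 0 ≤ y) {i : Finset.Icc 1 n} (hyi : y i = 0) : 0 ≤ field a p N n y i :=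
  truncRHS_nonneg_of_eq_zero ha hp_nonneg hp_le hN i.2
    (fun j hj => (Subtype.val_injective.extend_apply y 0 ⟨j, hj⟩).symm ▸ hy _)
    ((Subtype.val_injective.extend_apply y 0 i).trans hyi)

theorem mass_field (ha_symm : ∀ i j, a i j = a j i)
    (hN_mass : ∀ i j, 1 ≤ i → 1 ≤ j →
      ∑ s ∈ Finset.Icc 1 (i+j-1), (Nat.cast s : ℝ) * N i j s = (i : ℝ) + (j : ℝ))
    (y : Finset.Icc 1 n → ℝ) : mass n (field a p N n y) = 0 :=
  (Finset.sum_coe_sort (Finset.Icc 1 n) _).trans (sum_mul_truncRHS_eq_zero ha_symm hN_mass n _)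

theorem le_mass {y : Finset.Icc 1 n → ℝ} (hy : 0 ≤ y) (i : Finset.Icc 1 n) : y i ≤ mass n y := by
  have hi : (1 : ℝ) ≤ (i : ℕ) := by exact_mod_cast (Finset.mem_Icc.1 i.2).1
  calc y i ≤ (i : ℕ) * y i := le_mul_of_one_le_left (hy i) hi
    _ ≤ mass n y := Finset.single_le_sum (f := fun j : Finset.Icc 1 n => ((j : ℕ) : ℝ) * y j)
        (fun j _ => mul_nonneg (Nat.cast_nonneg _) (hy j)) (Finset.mem_univ i)

theorem mass_nonneg {y : Finset.Icc 1 n → ℝ} (hy : 0 ≤ y) : 0 ≤ mass n y :=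
  Finset.sum_nonneg fun i _ => mul_nonneg (Nat.cast_nonneg _) (hy i)

theorem mass_eq_of_hasDerivWithinAt (ha_symm : ∀ i j, a i j = a j i)
    (hN_mass : ∀ i j, 1 ≤ i → 1 ≤ j →
      ∑ s ∈ Finset.Icc 1 (i+j-1), (Nat.cast s : ℝ) * N i j s = (i : ℝ) + (j : ℝ))
    {α β : ℝ → Finset.Icc 1 n → ℝ} {T : ℝ}
    (hα : ∀ t ∈ Icc 0 T, HasDerivWithinAt α (field a p N n (β t)) (Icc 0 T) t) :
    ∀ t ∈ Icc 0 T, mass n (α t) = mass n (α 0) := by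
  have hderiv : ∀ t ∈ Icc 0 T, HasDerivWithinAt (fun t => mass n (α t)) 0 (Icc 0 T) t :=
    fun t ht => by
      have := HasDerivWithinAt.fun_sum (u := Finset.univ) fun i _ =>
        (hasDerivWithinAt_pi.1 (hα t ht) i).const_mul ((i : ℕ) : ℝ)
      rwa [← mass, mass_field ha_symm hN_mass] at this
  exact constant_of_has_deriv_right_zero (HasDerivWithinAt.continuousOn hderiv)
    fun t ht => (hderiv t (Ico_subset_Icc_self ht)).Ici_of_Icc ht

theorem nonneg_of_hasDerivWithinAt_field_boxClamp (ha : ∀ i j, 0 ≤ a i j)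
    (hp_nonneg : ∀ i j, 0 ≤ p i j) (hp_le : ∀ i j, p i j ≤ 1) (hN : ∀ i j s, 0 ≤ N i j s)
    {α : ℝ → Finset.Icc 1 n → ℝ} {R T : ℝ}
    (hα : ∀ t ∈ Icc 0 T, HasDerivWithinAt α (field a p N n (boxClamp R (α t))) (Icc 0 T) t)
    (h0 : 0 ≤ α 0) : ∀ t ∈ Icc 0 T, 0 ≤ α t := fun t ht i =>
  nonneg_of_deriv_nonneg_of_neg (fun s hs => hasDerivWithinAt_pi.1 (hα s hs) i) (h0 i)
    (fun _ _ hs => field_nonneg_of_eq_zero ha hp_nonneg hp_le hN boxClamp_nonneg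
      (boxClamp_apply_of_nonpos hs.le)) t ht

theorem exists_nonneg_solution (ha : ∀ i j, 0 ≤ a i j) (ha_symm : ∀ i j, a i j = a j i)
    (hp_nonneg : ∀ i j, 0 ≤ p i j) (hp_le : ∀ i j, p i j ≤ 1) (hN : ∀ i j s, 0 ≤ N i j s)
    (hN_mass : ∀ i j, 1 ≤ i → 1 ≤ j →
      ∑ s ∈ Finset.Icc 1 (i+j-1), (Nat.cast s : ℝ) * N i j s = (i : ℝ) + (j : ℝ))
    {y₀ : Finset.Icc 1 n → ℝ} (hy₀ : 0 ≤ y₀) {T : ℝ} (hT : 0 ≤ T) :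
    ∃ α : ℝ → Finset.Icc 1 n → ℝ, α 0 = y₀ ∧
      (∀ t ∈ Icc 0 T, HasDerivWithinAt α (field a p N n (α t)) (Icc 0 T) t) ∧
      ∀ t ∈ Icc 0 T, 0 ≤ α t := by
  set R := mass n y₀
  obtain ⟨α, hα0, hα⟩ := exists_forall_mem_Icc_hasDerivWithinAt_comp contDiff_field
    (lipschitzWith_boxClamp R) (isCompact_closedBall 0 R) (boxClamp_mem_closedBall
      (mass_nonneg hy₀)) y₀ hT
  have hnonneg := nonneg_of_hasDerivWithinAt_field_boxClamp ha hp_nonneg hp_le hN hα (hα0 ▸ hy₀)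
  have hclamp (t : ℝ) (ht : t ∈ Icc 0 T) : boxClamp R (α t) = α t :=
    boxClamp_of_nonneg_of_le (hnonneg t ht) fun i => (le_mass (hnonneg t ht) i).trans
      (mass_eq_of_hasDerivWithinAt ha_symm hN_mass hα t ht ▸ hα0 ▸ le_rfl)
  exact ⟨α, hα0, fun t ht => hclamp t ht ▸ hα t ht, hnonneg⟩

end TruncatedSystem

open TruncatedSystem

theorem truncated_system_existence_uniqueness_general
    (a p : ℕ → ℕ → ℝ) (N : ℕ → ℕ → ℕ → ℝ)
    (ha_nonneg : ∀ i j, 0 ≤ a i j) (ha_symm : ∀ i j, a i j = a j i)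
    (hp_nonneg : ∀ i j, 0 ≤ p i j)
    (hp_le : ∀ i j, p i j ≤ 1)
    (hN_nonneg : ∀ i j s, 0 ≤ N i j s)
    (hN_mass : ∀ i j, 1 ≤ i → 1 ≤ j →
      ∑ s ∈ Finset.Icc 1 (i+j-1), (Nat.cast s : ℝ) * N i j s = (i : ℝ) + (j : ℝ))
    (n : ℕ) (T : ℝ) (hT : 0 < T)
    (w0 : ℕ → ℝ) (hw0 : ∀ i ∈ Finset.Icc 1 n, 0 ≤ w0 i) :
    ∃ w : ℕ → ℝ → ℝ,
      (∀ i ∈ Finset.Icc 1 n, ContDiffOn ℝ 1 (w i) (Set.Icc 0 T)) ∧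
      (∀ i ∈ Finset.Icc 1 n, w i 0 = w0 i) ∧
      (∀ i ∈ Finset.Icc 1 n, ∀ t ∈ Set.Icc (0:ℝ) T,
        HasDerivWithinAt (w i) (truncRHS a p N n i (fun j => w j t)) (Set.Icc 0 T) t) ∧
      (∀ i ∈ Finset.Icc 1 n, ∀ t ∈ Set.Icc (0:ℝ) T, 0 ≤ w i t) ∧
      (∀ v : ℕ → ℝ → ℝ,
        (∀ i ∈ Finset.Icc 1 n, v i 0 = w0 i) →
        (∀ i ∈ Finset.Icc 1 n, ∀ t ∈ Set.Icc (0:ℝ) T,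
          HasDerivWithinAt (v i) (truncRHS a p N n i (fun j => v j t)) (Set.Icc 0 T) t) →
        ∀ i ∈ Finset.Icc 1 n, ∀ t ∈ Set.Icc (0:ℝ) T, v i t = w i t) := by
  obtain ⟨α, hα0, hα, hα_nonneg⟩ := exists_nonneg_solution ha_nonneg ha_symm hp_nonneg hp_le
    hN_nonneg hN_mass (y₀ := (Finset.Icc 1 n).restrict w0) (fun i => hw0 i i.2) hT.le
  set w : ℕ → ℝ → ℝ := fun i t => Function.extend Subtype.val (α t) 0 i
  have hw (t : ℝ) : (Finset.Icc 1 n).restrict (fun j => w j t) = α t :=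
    funext fun i => Subtype.val_injective.extend_apply (α t) 0 i
  have hw_apply (i : ℕ) (hi : i ∈ Finset.Icc 1 n) (t : ℝ) : w i t = α t ⟨i, hi⟩ :=
    congrFun (hw t) ⟨i, hi⟩
  have hw_deriv : ∀ t ∈ Icc 0 T, ∀ i ∈ Finset.Icc 1 n,
      HasDerivWithinAt (w i) (truncRHS a p N n i fun j => w j t) (Icc 0 T) t :=
    fun t ht => hasDerivWithinAt_restrict_iff.1 <| by simpa only [hw] using hα t ht
  refine ⟨w, fun i hi => ?_, fun i hi => ?_, fun i hi t ht => hw_deriv t ht i hi,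
    fun i hi t ht => ?_, fun v hv0 hv i hi t ht => ?_⟩
  · exact (contDiffOn_pi.1 (contDiffOn_Icc_of_hasDerivWithinAt_of_contDiff contDiff_field hα)
      ⟨i, hi⟩).congr fun t _ => hw_apply i hi t
  · rw [hw_apply i hi, hα0]
    rfl
  · exact hw_apply i hi t ▸ hα_nonneg t ht _
  · have huniq := eqOn_Icc_of_hasDerivWithinAt_of_contDiff contDiff_field
      (fun t ht => hasDerivWithinAt_restrict_iff.2 fun i hi => hv i hi t ht) hα
      (funext fun i => (hv0 i i.2).trans (congrFun hα0 i).symm)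
    exact (congrFun (huniq ht) ⟨i, hi⟩).trans (hw_apply i hi t).symm

/-- For each `n ≥ 2`, `T ∈ (0, ∞)` and nonnegative initial data, the truncated
system of the discrete coagulation equations with collisional breakage has a unique
continuously differentiable solution on `[0, T]`, and this solution is nonnegative. -/
theorem truncated_system_existence_uniqueness
    (a p : ℕ → ℕ → ℝ) (N : ℕ → ℕ → ℕ → ℝ) (A : ℝ) (hA : 0 < A)
    (ha_nonneg : ∀ i j, 0 ≤ a i j) (ha_symm : ∀ i j, a i j = a j i)
    (ha_bound : ∀ i j, 1 ≤ i → 1 ≤ j → a i j ≤ A * ((i : ℝ) + (j : ℝ)))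
    (hp_nonneg : ∀ i j, 0 ≤ p i j) (hp_symm : ∀ i j, p i j = p j i)
    (hp_le : ∀ i j, p i j ≤ 1)
    (hN_nonneg : ∀ i j s, 0 ≤ N i j s) (hN_symm : ∀ i j s, N i j s = N j i s)
    (hN_mass : ∀ i j, 1 ≤ i → 1 ≤ j →
      ∑ s ∈ Finset.Icc 1 (i+j-1), (Nat.cast s : ℝ) * N i j s = (i : ℝ) + (j : ℝ))
    (n : ℕ) (hn : 2 ≤ n) (T : ℝ) (hT : 0 < T)
    (w0 : ℕ → ℝ) (hw0 : ∀ i ∈ Finset.Icc 1 n, 0 ≤ w0 i) :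
    ∃ w : ℕ → ℝ → ℝ,
      (∀ i ∈ Finset.Icc 1 n, ContDiffOn ℝ 1 (w i) (Set.Icc 0 T)) ∧
      (∀ i ∈ Finset.Icc 1 n, w i 0 = w0 i) ∧
      (∀ i ∈ Finset.Icc 1 n, ∀ t ∈ Set.Icc (0:ℝ) T,
        HasDerivWithinAt (w i) (truncRHS a p N n i (fun j => w j t)) (Set.Icc 0 T) t) ∧
      (∀ i ∈ Finset.Icc 1 n, ∀ t ∈ Set.Icc (0:ℝ) T, 0 ≤ w i t) ∧
      (∀ v : ℕ → ℝ → ℝ,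
        (∀ i ∈ Finset.Icc 1 n, v i 0 = w0 i) →
        (∀ i ∈ Finset.Icc 1 n, ∀ t ∈ Set.Icc (0:ℝ) T,
          HasDerivWithinAt (v i) (truncRHS a p N n i (fun j => v j t)) (Set.Icc 0 T) t) →
        ∀ i ∈ Finset.Icc 1 n, ∀ t ∈ Set.Icc (0:ℝ) T, v i t = w i t) :=
  truncated_system_existence_uniqueness_general a p N ha_nonneg ha_symm hp_nonneg hp_le hN_nonneg
    hN_mass n T hT w0 hw0
end

section
/- Fix β ∈ (1,2], T ∈ (0,∞), and a constant A > 0, and assume 0 ≤ a_{i,j} = a_{j,i} ≤ A(i+j) for all i,j ≥ 1. Let n ≥ 2 and let w^n be the unique nonnegative C^1 solution on [0,T] of the truncated coagulation–collisional-breakage system with nonnegative initial data (w_i^0)_{i=1}^n, and extend it by zero for i > n. Then, with Λ_1 = ∑_{i≥1} i w_i^0 and the constant ȷ_β > 0 (depending only on β) for which (i+j)((i+j)^β − i^β − j^β) ≤ ȷ_β (i j^β + i^β j) holds for all i,j ≥ 1, the β-th moment satisfies ∑_{i=1}^{∞} i^β w_i^n(t) ≤ (∑_{i=1}^{∞} i^β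 w_i^0) exp(A ȷ_β Λ_1 T) for all t ∈ [0,T]. -/
open Finset

theorem rpow_le_mul_rpow_sub_one {s m β : ℝ} (hs : 0 ≤ s) (hsm : s ≤ m) (hβ : 1 ≤ β) :
    s ^ β ≤ s * m ^ (β - 1) :=
  calc s ^ β = s * s ^ (β - 1) := by
        rw [mul_comm, ← Real.rpow_add_one' hs (by linarith), sub_add_cancel]
    _ ≤ s * m ^ (β - 1) := by gcongr

theorem le_mul_exp_of_hasDerivWithinAt_le {f f' : ℝ → ℝ} {K a b : ℝ}
    (hf : ∀ x ∈ Set.Icc a b, HasDerivWithinAt f (f' x) (Set.Icc a b) x)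
    (bound : ∀ x ∈ Set.Icc a b, f' x ≤ K * f x) :
    ∀ x ∈ Set.Icc a b, f x ≤ f a * Real.exp (K * (x - a)) := by
  intro x hx
  rw [← gronwallBound_ε0]
  refine le_gronwallBound_of_liminf_deriv_right_le (fun y hy => (hf y hy).continuousWithinAt)
    (fun y hy r hr => ?_) le_rfl (fun y hy => by simpa using bound y (Set.Ico_subset_Icc_self hy))
    x hx
  exact ((hf y (Set.Ico_subset_Icc_self hy)).mono_of_mem_nhdsWithin
    (Icc_mem_nhdsGE_of_mem hy)).liminf_right_slope_le hr

theorem tsum_eq_sum_Icc_of_eq_zero {M : Type*} [AddCommMonoid M] [TopologicalSpace M]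
    {f : ℕ → M} {n : ℕ} (h0 : f 0 = 0) (h : ∀ i, n < i → f i = 0) :
    ∑' i, f i = ∑ i ∈ Icc 1 n, f i :=
  tsum_eq_sum fun i hi => by
    rcases Nat.eq_zero_or_pos i with rfl | hi0
    · exact h0
    · exact h i (by simp only [mem_Icc, not_and, not_le] at hi; exact hi hi0)

def collisionPairs (n : ℕ) : Finset (ℕ × ℕ) :=
  (Icc 1 n ×ˢ Icc 1 n).filter fun x => x.1 + x.2 ≤ n

theorem mem_collisionPairs {n : ℕ} {x : ℕ × ℕ} :
    x ∈ collisionPairs n ↔ 1 ≤ x.1 ∧ 1 ≤ x.2 ∧ x.1 + x.2 ≤ n := by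
  simp only [collisionPairs, mem_filter, mem_product, mem_Icc]
  omega

section collisionPairs

variable {M : Type*} [AddCommMonoid M] (n : ℕ) (f : ℕ → ℕ → M)

theorem sum_collisionPairs_swap :
    ∑ x ∈ collisionPairs n, f x.2 x.1 = ∑ x ∈ collisionPairs n, f x.1 x.2 :=
  sum_equiv (Equiv.prodComm ℕ ℕ) (fun x => by
    simp only [mem_collisionPairs, Equiv.prodComm_apply, Prod.fst_swap, Prod.snd_swap]; omega)
    fun _ _ => rfl

theorem sum_collisionPairs :
    ∑ x ∈ collisionPairs n, f x.1 x.2 = ∑ i ∈ Icc 1 n, ∑ j ∈ Icc 1 (n - i), f i j :=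
  sum_finset_product' _ _ _ fun x => by simp only [mem_collisionPairs, mem_Icc]; omega

theorem sum_collisionPairs_eq_sum_Icc_sub :
    ∑ x ∈ collisionPairs n, f x.1 x.2 = ∑ i ∈ Icc 1 n, ∑ j ∈ Icc 1 (i - 1), f j (i - j) := by
  rw [sum_sigma']
  refine sum_nbij' (fun x => ⟨x.1 + x.2, x.1⟩) (fun x => (x.2, x.1 - x.2)) ?_ ?_ ?_ ?_ ?_ <;>
    simp only [mem_sigma, mem_Icc, mem_collisionPairs, Prod.forall, Sigma.forall] <;>
    intros <;> grind

theorem sum_breakage_eq_sum_collisionPairs (g : ℕ → ℕ → ℕ → M) :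
    ∑ i ∈ Icc 1 n, ∑ j ∈ Icc (i + 1) n, ∑ k ∈ Icc 1 (j - 1), g i (j - k) k
      = ∑ x ∈ collisionPairs n, ∑ s ∈ Icc 1 (x.1 + x.2 - 1), g s x.1 x.2 := by
  rw [sum_collisionPairs_swap n fun k m => ∑ s ∈ Icc 1 (m + k - 1), g s m k,
    sum_collisionPairs_eq_sum_Icc_sub n fun k m => ∑ s ∈ Icc 1 (m + k - 1), g s m k,
    sum_comm' (t' := Icc 1 n) (s' := fun j => Icc 1 (j - 1)) (by simp only [mem_Icc]; omega)]
  refine sum_congr rfl fun j _ => ?_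
  rw [sum_comm]
  refine sum_congr rfl fun k hk => ?_
  rw [mem_Icc] at hk
  rw [show j - k + k = j by omega]

end collisionPairs

theorem sum_collisionPairs_eq_zero_of_antisymm {f : ℕ → ℕ → ℝ} (hf : ∀ j k, f k j = -f j k)
    (n : ℕ) : ∑ x ∈ collisionPairs n, f x.1 x.2 = 0 := by
  have := sum_collisionPairs_swap n f
  rw [sum_congr rfl fun x _ => hf x.1 x.2, sum_neg_distrib] at this
  linarith

def collisionGain (p : ℕ → ℕ → ℝ) (N : ℕ → ℕ → ℕ → ℝ) (φ : ℕ → ℝ) (j k : ℕ) : ℝ :=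
  p j k * φ (j + k) + (1 - p j k) * ∑ s ∈ Icc 1 (j + k - 1), φ s * N j k s

section truncRHS

variable {a p : ℕ → ℕ → ℝ} {N : ℕ → ℕ → ℕ → ℝ}

theorem sum_mul_truncRHS_eq_sum_collisionPairs (n : ℕ) (φ u : ℕ → ℝ) :
    ∑ i ∈ Icc 1 n, φ i * truncRHS a p N n i u
      = ∑ x ∈ collisionPairs n, a x.1 x.2 * u x.1 * u x.2 *
          (collisionGain p N φ x.1 x.2 / 2 - φ x.1) := by
  have gain : ∑ i ∈ Icc 1 n, φ i * ∑ j ∈ Icc 1 (i - 1), p j (i - j) * a j (i - j) * u j * u (i - j)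
      = ∑ x ∈ collisionPairs n, a x.1 x.2 * u x.1 * u x.2 * (p x.1 x.2 * φ (x.1 + x.2)) := by
    rw [sum_collisionPairs_eq_sum_Icc_sub n fun j k => a j k * u j * u k * (p j k * φ (j + k))]
    refine sum_congr rfl fun i hi => ?_
    rw [mul_sum]
    refine sum_congr rfl fun j hj => ?_
    rw [mem_Icc] at hi hj
    rw [show j + (i - j) = i by omega]
    ring
  have breakage : ∑ i ∈ Icc 1 n, φ i * ∑ j ∈ Icc (i + 1) n, ∑ k ∈ Icc 1 (j - 1),
        N (j - k) k i * (1 - p (j - k) k) * a (j - k) k * u (j - k) * u k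
      = ∑ x ∈ collisionPairs n, a x.1 x.2 * u x.1 * u x.2 *
          ((1 - p x.1 x.2) * ∑ s ∈ Icc 1 (x.1 + x.2 - 1), φ s * N x.1 x.2 s) := by
    simp only [mul_sum]
    rw [sum_breakage_eq_sum_collisionPairs n fun s j k =>
      φ s * (N j k s * (1 - p j k) * a j k * u j * u k)]
    exact sum_congr rfl fun x _ => sum_congr rfl fun s _ => by ring
  have loss : ∑ i ∈ Icc 1 n, φ i * ∑ j ∈ Icc 1 (n - i), a i j * u i * u j
      = ∑ x ∈ collisionPairs n, a x.1 x.2 * u x.1 * u x.2 * φ x.1 := by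
    rw [sum_collisionPairs n fun j k => a j k * u j * u k * φ j]
    exact sum_congr rfl fun i _ => by rw [mul_sum]; exact sum_congr rfl fun j _ => by ring
  calc ∑ i ∈ Icc 1 n, φ i * truncRHS a p N n i u
      = (1 / 2) * ∑ x ∈ collisionPairs n, a x.1 x.2 * u x.1 * u x.2 * (p x.1 x.2 * φ (x.1 + x.2))
        - ∑ x ∈ collisionPairs n, a x.1 x.2 * u x.1 * u x.2 * φ x.1
        + (1 / 2) * ∑ x ∈ collisionPairs n, a x.1 x.2 * u x.1 * u x.2 *
            ((1 - p x.1 x.2) * ∑ s ∈ Icc 1 (x.1 + x.2 - 1), φ s * N x.1 x.2 s) := by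
        rw [← gain, ← loss, ← breakage, mul_sum, mul_sum, ← sum_sub_distrib, ← sum_add_distrib]
        exact sum_congr rfl fun i _ => by unfold truncRHS; ring
    _ = _ := by
        rw [mul_sum, mul_sum, ← sum_sub_distrib, ← sum_add_distrib]
        exact sum_congr rfl fun x _ => by unfold collisionGain; ring

theorem sum_mul_truncRHS (ha : ∀ i j, a i j = a j i) (n : ℕ) (φ u : ℕ → ℝ) :
    ∑ i ∈ Icc 1 n, φ i * truncRHS a p N n i u
      = (1 / 2) * ∑ x ∈ collisionPairs n, a x.1 x.2 * u x.1 * u x.2 *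
          (collisionGain p N φ x.1 x.2 - φ x.1 - φ x.2) := by
  rw [sum_mul_truncRHS_eq_sum_collisionPairs, mul_sum, ← sub_eq_zero, ← sum_sub_distrib]
  refine (sum_congr rfl fun x _ => ?_).trans (sum_collisionPairs_eq_zero_of_antisymm
    (f := fun j k => a j k * u j * u k * (φ k - φ j) / 2) (fun j k => by rw [ha]; ring) n)
  ring

theorem sum_natCast_mul_truncRHS_eq_zero (ha_symm : ∀ i j, a i j = a j i)
    (hN_mass : ∀ i j, 1 ≤ i → 1 ≤ j →
      ∑ s ∈ Icc 1 (i + j - 1), (Nat.cast s : ℝ) * N i j s = (i : ℝ) + (j : ℝ))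
    (n : ℕ) (u : ℕ → ℝ) :
    ∑ i ∈ Icc 1 n, (i : ℝ) * truncRHS a p N n i u = 0 := by
  rw [sum_mul_truncRHS ha_symm]
  refine mul_eq_zero_of_right _ (sum_eq_zero fun x hx => ?_)
  rw [mem_collisionPairs] at hx
  simp only [collisionGain, hN_mass x.1 x.2 hx.1 hx.2.1, Nat.cast_add]
  ring

theorem collisionGain_rpow_le {β : ℝ} (hβ : 1 ≤ β) {j k : ℕ} (hp_le : p j k ≤ 1)
    (hN_nonneg : ∀ s, 0 ≤ N j k s)
    (hN_mass : ∑ s ∈ Icc 1 (j + k - 1), (Nat.cast s : ℝ) * N j k s = (j : ℝ) + (k : ℝ)) :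
    collisionGain p N (fun s => (s : ℝ) ^ β) j k ≤ ((j : ℝ) + k) ^ β := by
  have fragments : ∑ s ∈ Icc 1 (j + k - 1), (s : ℝ) ^ β * N j k s ≤ ((j : ℝ) + k) ^ β :=
    calc ∑ s ∈ Icc 1 (j + k - 1), (s : ℝ) ^ β * N j k s
        ≤ ∑ s ∈ Icc 1 (j + k - 1), ((j : ℝ) + k) ^ (β - 1) * ((s : ℝ) * N j k s) := by
          refine sum_le_sum fun s hs => ?_
          have hs : (s : ℝ) ≤ j + k := by
            rw [mem_Icc] at hs
            exact_mod_cast (by omega : s ≤ j + k)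
          calc (s : ℝ) ^ β * N j k s ≤ (s * ((j : ℝ) + k) ^ (β - 1)) * N j k s := by
                gcongr
                · exact hN_nonneg s
                · exact rpow_le_mul_rpow_sub_one s.cast_nonneg hs hβ
            _ = ((j : ℝ) + k) ^ (β - 1) * ((s : ℝ) * N j k s) := by ring
      _ = ((j : ℝ) + k) ^ β := by
          rw [← mul_sum, hN_mass, ← Real.rpow_add_one' (by positivity) (by linarith),
            sub_add_cancel]
  calc collisionGain p N (fun s => (s : ℝ) ^ β) j k
      ≤ p j k * ((j : ℝ) + k) ^ β + (1 - p j k) * ((j : ℝ) + k) ^ β := by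
        simp only [collisionGain, Nat.cast_add]
        gcongr
    _ = ((j : ℝ) + k) ^ β := by ring

theorem mul_collisionGain_rpow_sub_le {β A jβ : ℝ} (hβ : 1 ≤ β) (hA : 0 ≤ A) {j k : ℕ}
    (ha_nonneg : 0 ≤ a j k) (ha_bound : a j k ≤ A * ((j : ℝ) + (k : ℝ))) (hp_le : p j k ≤ 1)
    (hN_nonneg : ∀ s, 0 ≤ N j k s)
    (hN_mass : ∑ s ∈ Icc 1 (j + k - 1), (Nat.cast s : ℝ) * N j k s = (j : ℝ) + (k : ℝ))
    (hjβ_ineq : ((j : ℝ) + (k : ℝ)) * (((j : ℝ) + (k : ℝ)) ^ β - (j : ℝ) ^ β - (k : ℝ) ^ β)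
        ≤ jβ * ((j : ℝ) * (k : ℝ) ^ β + (j : ℝ) ^ β * (k : ℝ))) :
    a j k * (collisionGain p N (fun s => (s : ℝ) ^ β) j k - j ^ β - k ^ β)
      ≤ A * jβ * ((j : ℝ) * (k : ℝ) ^ β + (j : ℝ) ^ β * (k : ℝ)) := by
  have superadd : (j : ℝ) ^ β + (k : ℝ) ^ β ≤ ((j : ℝ) + k) ^ β :=
    Real.add_rpow_le_rpow_add j.cast_nonneg k.cast_nonneg hβ
  have gain := collisionGain_rpow_le hβ hp_le hN_nonneg hN_mass
  calc a j k * (collisionGain p N (fun s => (s : ℝ) ^ β) j k - j ^ β - k ^ β)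
      ≤ a j k * (((j : ℝ) + k) ^ β - j ^ β - k ^ β) := by gcongr
    _ ≤ A * ((j : ℝ) + k) * (((j : ℝ) + k) ^ β - j ^ β - k ^ β) := by gcongr; linarith
    _ ≤ A * jβ * ((j : ℝ) * (k : ℝ) ^ β + (j : ℝ) ^ β * (k : ℝ)) := by
        rw [mul_assoc A, mul_assoc A]
        gcongr

theorem sum_rpow_mul_truncRHS_le {β A jβ : ℝ} (hβ : 1 ≤ β) (hA : 0 ≤ A) (hjβ : 0 ≤ jβ)
    (ha_nonneg : ∀ i j, 0 ≤ a i j) (ha_symm : ∀ i j, a i j = a j i)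
    (ha_bound : ∀ i j, 1 ≤ i → 1 ≤ j → a i j ≤ A * ((i : ℝ) + (j : ℝ)))
    (hp_le : ∀ i j, p i j ≤ 1) (hN_nonneg : ∀ i j s, 0 ≤ N i j s)
    (hN_mass : ∀ i j, 1 ≤ i → 1 ≤ j →
      ∑ s ∈ Icc 1 (i + j - 1), (Nat.cast s : ℝ) * N i j s = (i : ℝ) + (j : ℝ))
    (hjβ_ineq : ∀ i j : ℕ, 1 ≤ i → 1 ≤ j →
      ((i : ℝ) + (j : ℝ)) * (((i : ℝ) + (j : ℝ)) ^ β - (i : ℝ) ^ β - (j : ℝ) ^ β)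
        ≤ jβ * ((i : ℝ) * (j : ℝ) ^ β + (i : ℝ) ^ β * (j : ℝ)))
    (n : ℕ) {u : ℕ → ℝ} (hu : ∀ i ∈ Icc 1 n, 0 ≤ u i) :
    ∑ i ∈ Icc 1 n, (i : ℝ) ^ β * truncRHS a p N n i u
      ≤ A * jβ * (∑ i ∈ Icc 1 n, (i : ℝ) * u i) * ∑ i ∈ Icc 1 n, (i : ℝ) ^ β * u i := by
  set B : ℕ × ℕ → ℝ := fun x => A * jβ *
    ((x.1 * u x.1) * (x.2 ^ β * u x.2) + (x.1 ^ β * u x.1) * (x.2 * u x.2)) with hB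
  have term : ∀ x ∈ collisionPairs n, a x.1 x.2 * u x.1 * u x.2 *
      (collisionGain p N (fun s => (s : ℝ) ^ β) x.1 x.2 - x.1 ^ β - x.2 ^ β) ≤ B x := by
    rintro ⟨j, k⟩ hx
    obtain ⟨hj, hk, hjk⟩ := mem_collisionPairs.1 hx
    have hu_jk : 0 ≤ u j * u k :=
      mul_nonneg (hu j (mem_Icc.2 ⟨hj, by omega⟩)) (hu k (mem_Icc.2 ⟨hk, by omega⟩))
    calc a j k * u j * u k * (collisionGain p N (fun s => (s : ℝ) ^ β) j k - j ^ β - k ^ β)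
        = a j k * (collisionGain p N (fun s => (s : ℝ) ^ β) j k - j ^ β - k ^ β) * (u j * u k) := by
          ring
      _ ≤ A * jβ * ((j : ℝ) * (k : ℝ) ^ β + (j : ℝ) ^ β * (k : ℝ)) * (u j * u k) := by
          refine mul_le_mul_of_nonneg_right ?_ hu_jk
          exact mul_collisionGain_rpow_sub_le hβ hA (ha_nonneg j k) (ha_bound j k hj hk) (hp_le j k)
            (hN_nonneg j k) (hN_mass j k hj hk) (hjβ_ineq j k hj hk)
      _ = B (j, k) := by rw [hB]; ring
  calc ∑ i ∈ Icc 1 n, (i : ℝ) ^ β * truncRHS a p N n i u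
      ≤ (1 / 2) * ∑ x ∈ collisionPairs n, B x := by
        rw [sum_mul_truncRHS ha_symm]
        gcongr with x hx
        exact term x hx
    _ ≤ (1 / 2) * ∑ x ∈ Icc 1 n ×ˢ Icc 1 n, B x := by
        refine mul_le_mul_of_nonneg_left
          (sum_le_sum_of_subset_of_nonneg (filter_subset _ _) fun x hx _ => ?_) (by norm_num)
        simp only [mem_product] at hx
        have := hu x.1 hx.1
        have := hu x.2 hx.2
        positivity
    _ = A * jβ * (∑ i ∈ Icc 1 n, (i : ℝ) * u i) * ∑ i ∈ Icc 1 n, (i : ℝ) ^ β * u i := by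
        simp only [hB, ← mul_sum, sum_add_distrib, sum_product, ← sum_mul]
        ring

end truncRHS

section solution

variable {a p : ℕ → ℕ → ℝ} {N : ℕ → ℕ → ℕ → ℝ} {n : ℕ} {T : ℝ} {w : ℕ → ℝ → ℝ}

theorem hasDerivWithinAt_sum_mul_of_truncRHS
    (hw_ode : ∀ i ∈ Icc 1 n, ∀ t ∈ Set.Icc (0:ℝ) T,
      HasDerivWithinAt (w i) (truncRHS a p N n i (fun j => w j t)) (Set.Icc 0 T) t)
    (φ : ℕ → ℝ) :
    ∀ t ∈ Set.Icc 0 T, HasDerivWithinAt (fun t => ∑ i ∈ Icc 1 n, φ i * w i t)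
      (∑ i ∈ Icc 1 n, φ i * truncRHS a p N n i fun j => w j t) (Set.Icc 0 T) t :=
  fun t ht => HasDerivWithinAt.fun_sum fun i hi => (hw_ode i hi t ht).const_mul (φ i)

theorem sum_natCast_mul_eq_of_truncRHS (ha_symm : ∀ i j, a i j = a j i)
    (hN_mass : ∀ i j, 1 ≤ i → 1 ≤ j →
      ∑ s ∈ Icc 1 (i + j - 1), (Nat.cast s : ℝ) * N i j s = (i : ℝ) + (j : ℝ))
    (hw_ode : ∀ i ∈ Icc 1 n, ∀ t ∈ Set.Icc (0:ℝ) T,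
      HasDerivWithinAt (w i) (truncRHS a p N n i (fun j => w j t)) (Set.Icc 0 T) t) :
    ∀ t ∈ Set.Icc 0 T, ∑ i ∈ Icc 1 n, (i : ℝ) * w i t = ∑ i ∈ Icc 1 n, (i : ℝ) * w i 0 := by
  have deriv := hasDerivWithinAt_sum_mul_of_truncRHS hw_ode fun i => (i : ℝ)
  refine constant_of_has_deriv_right_zero (fun t ht => (deriv t ht).continuousWithinAt)
    fun t ht => ?_
  have := (deriv t (Set.Ico_subset_Icc_self ht)).mono_of_mem_nhdsWithin (Icc_mem_nhdsGE_of_mem ht)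
  rwa [sum_natCast_mul_truncRHS_eq_zero ha_symm hN_mass] at this

end solution

theorem truncated_beta_moment_bound_general
    (β : ℝ) (hβ1 : 1 < β)
    (T : ℝ) (A : ℝ) (hA : 0 < A)
    (a p : ℕ → ℕ → ℝ) (N : ℕ → ℕ → ℕ → ℝ)
    (ha_nonneg : ∀ i j, 0 ≤ a i j) (ha_symm : ∀ i j, a i j = a j i)
    (ha_bound : ∀ i j, 1 ≤ i → 1 ≤ j → a i j ≤ A * ((i : ℝ) + (j : ℝ)))
    (hp_le : ∀ i j, p i j ≤ 1)
    (hN_nonneg : ∀ i j s, 0 ≤ N i j s)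
    (hN_mass : ∀ i j, 1 ≤ i → 1 ≤ j →
      ∑ s ∈ Finset.Icc 1 (i+j-1), (Nat.cast s : ℝ) * N i j s = (i : ℝ) + (j : ℝ))
    (n : ℕ)
    (w : ℕ → ℝ → ℝ)
    (hw_nonneg : ∀ i ∈ Finset.Icc 1 n, ∀ t ∈ Set.Icc (0:ℝ) T, 0 ≤ w i t)
    (hw_ode : ∀ i ∈ Finset.Icc 1 n, ∀ t ∈ Set.Icc (0:ℝ) T,
      HasDerivWithinAt (w i) (truncRHS a p N n i (fun j => w j t)) (Set.Icc 0 T) t)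
    (hw_ext : ∀ i, n < i → ∀ t : ℝ, w i t = 0)
    (Λ₁ : ℝ) (hΛ₁ : Λ₁ = ∑' i : ℕ, (Nat.cast i : ℝ) * w i 0)
    (jβ : ℝ) (hjβ : 0 < jβ)
    (hjβ_ineq : ∀ i j : ℕ, 1 ≤ i → 1 ≤ j →
      ((i : ℝ) + (j : ℝ)) * (((i : ℝ) + (j : ℝ)) ^ β - (i : ℝ) ^ β - (j : ℝ) ^ β)
        ≤ jβ * ((i : ℝ) * (j : ℝ) ^ β + (i : ℝ) ^ β * (j : ℝ))) :
    ∀ t ∈ Set.Icc (0:ℝ) T,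
      ∑' i : ℕ, (Nat.cast i : ℝ) ^ β * w i t
        ≤ (∑' i : ℕ, (Nat.cast i : ℝ) ^ β * w i 0) * Real.exp (A * jβ * Λ₁ * T) := by
  intro t ht
  have h0T : (0 : ℝ) ∈ Set.Icc 0 T := ⟨le_rfl, ht.1.trans ht.2⟩
  have tsum_moment : ∀ φ : ℕ → ℝ, φ 0 = 0 → ∀ s,
      ∑' i, φ i * w i s = ∑ i ∈ Icc 1 n, φ i * w i s :=
    fun φ hφ s => tsum_eq_sum_Icc_of_eq_zero (by simp [hφ]) fun i hi => by simp [hw_ext i hi]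
  have mass : ∀ s ∈ Set.Icc 0 T, ∑ i ∈ Icc 1 n, (i : ℝ) * w i s = Λ₁ := by
    rw [hΛ₁, tsum_moment _ Nat.cast_zero]
    exact sum_natCast_mul_eq_of_truncRHS ha_symm hN_mass hw_ode
  have hΛ₁_nonneg : 0 ≤ Λ₁ := mass 0 h0T ▸
    sum_nonneg fun i hi => mul_nonneg i.cast_nonneg (hw_nonneg i hi 0 h0T)
  have hβ0 : β ≠ 0 := by positivity
  rw [tsum_moment _ (by simp [hβ0]), tsum_moment _ (by simp [hβ0])]
  calc _ ≤ _ := le_mul_exp_of_hasDerivWithinAt_le (K := A * jβ * Λ₁)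
        (hasDerivWithinAt_sum_mul_of_truncRHS hw_ode _)
        (fun s hs => by
          rw [← mass s hs]
          exact sum_rpow_mul_truncRHS_le hβ1.le hA.le hjβ.le ha_nonneg ha_symm ha_bound hp_le
            hN_nonneg hN_mass hjβ_ineq n fun i hi => hw_nonneg i hi s hs) t ht
    _ ≤ _ := by
      gcongr
      · exact sum_nonneg fun i hi => mul_nonneg (by positivity) (hw_nonneg i hi 0 h0T)
      · linarith [ht.2]

/-- Uniform bound on the `β`-th moment of the (zero-extended) truncated solutions:
`∑_{i≥1} i^β wᵢⁿ(t) ≤ (∑_{i≥1} i^β wᵢ⁰) exp(A ȷ_β Λ₁ T)` for `t ∈ [0,T]`. -/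
theorem truncated_beta_moment_bound
    (β : ℝ) (hβ1 : 1 < β) (hβ2 : β ≤ 2)
    (T : ℝ) (hT : 0 < T) (A : ℝ) (hA : 0 < A)
    (a p : ℕ → ℕ → ℝ) (N : ℕ → ℕ → ℕ → ℝ)
    (ha_nonneg : ∀ i j, 0 ≤ a i j) (ha_symm : ∀ i j, a i j = a j i)
    (ha_bound : ∀ i j, 1 ≤ i → 1 ≤ j → a i j ≤ A * ((i : ℝ) + (j : ℝ)))
    (hp_nonneg : ∀ i j, 0 ≤ p i j) (hp_symm : ∀ i j, p i j = p j i)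
    (hp_le : ∀ i j, p i j ≤ 1)
    (hN_nonneg : ∀ i j s, 0 ≤ N i j s) (hN_symm : ∀ i j s, N i j s = N j i s)
    (hN_mass : ∀ i j, 1 ≤ i → 1 ≤ j →
      ∑ s ∈ Finset.Icc 1 (i+j-1), (Nat.cast s : ℝ) * N i j s = (i : ℝ) + (j : ℝ))
    (n : ℕ) (hn : 2 ≤ n)
    (w : ℕ → ℝ → ℝ)
    (hw_nonneg : ∀ i ∈ Finset.Icc 1 n, ∀ t ∈ Set.Icc (0:ℝ) T, 0 ≤ w i t)
    (hw_init_nonneg : ∀ i ∈ Finset.Icc 1 n, 0 ≤ w i 0)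
    (hw_ode : ∀ i ∈ Finset.Icc 1 n, ∀ t ∈ Set.Icc (0:ℝ) T,
      HasDerivWithinAt (w i) (truncRHS a p N n i (fun j => w j t)) (Set.Icc 0 T) t)
    (hw_ext : ∀ i, n < i → ∀ t : ℝ, w i t = 0)
    (Λ₁ : ℝ) (hΛ₁ : Λ₁ = ∑' i : ℕ, (Nat.cast i : ℝ) * w i 0)
    (jβ : ℝ) (hjβ : 0 < jβ)
    (hjβ_ineq : ∀ i j : ℕ, 1 ≤ i → 1 ≤ j →
      ((i : ℝ) + (j : ℝ)) * (((i : ℝ) + (j : ℝ)) ^ β - (i : ℝ) ^ β - (j : ℝ) ^ β)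
        ≤ jβ * ((i : ℝ) * (j : ℝ) ^ β + (i : ℝ) ^ β * (j : ℝ))) :
    ∀ t ∈ Set.Icc (0:ℝ) T,
      ∑' i : ℕ, (Nat.cast i : ℝ) ^ β * w i t
        ≤ (∑' i : ℕ, (Nat.cast i : ℝ) ^ β * w i 0) * Real.exp (A * jβ * Λ₁ * T) :=
  truncated_beta_moment_bound_general β hβ1 T A hA a p N ha_nonneg ha_symm ha_bound hp_le hN_nonneg
    hN_mass n w hw_nonneg hw_ode hw_ext Λ₁ hΛ₁ jβ hjβ hjβ_ineq
end

section
/- For every β ∈ (1,2] there exists a constant ȷ_β > 0, depending only on β, such that for all positive integers i and j, (i+j)((i+j)^β − i^β − j^β) ≤ ȷ_β (i j^β + i^β j). -/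
/-!
By convexity of `t ↦ t ^ p` (Bernoulli's inequality), `(x + y) ^ p - y ^ p ≤ p x (x + y) ^ (p - 1)`.
For `x ≤ y` this bounds `(x + y) ((x + y) ^ p - x ^ p - y ^ p)` by `p x (x + y) ^ p ≤ p 2 ^ p x y ^ p`,
so `ȷ_β = β 2 ^ β` works.
-/

namespace Real

variable {p x y : ℝ}

theorem mul_rpow_add_sub_rpow_le (hp : 1 ≤ p) (hx : 0 ≤ x) (hy : 0 ≤ y) :
    (x + y) * ((x + y) ^ p - y ^ p) ≤ p * x * (x + y) ^ p := by
  rcases (add_nonneg hx hy).eq_or_lt with hxy | hxy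
  · rw [← hxy, zero_mul, (by linarith : x = 0)]
    simp
  have hbernoulli : 1 + p * (-x / (x + y)) ≤ (1 + -x / (x + y)) ^ p :=
    one_add_mul_self_le_rpow_one_add (by rw [neg_div, neg_le_neg_iff, div_le_one hxy]; linarith) hp
  have hy_div : 1 + -x / (x + y) = y / (x + y) := by field_simp; ring
  rw [hy_div, div_rpow hy hxy.le, le_div_iff₀ (by positivity)] at hbernoulli
  have hscaled := mul_le_mul_of_nonneg_left hbernoulli hxy.le
  have hexpand : (x + y) * ((1 + p * (-x / (x + y))) * (x + y) ^ p)
      = (x + y) * (x + y) ^ p - p * x * (x + y) ^ p := by field_simp; ring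
  linarith

theorem mul_rpow_add_sub_rpow_sub_rpow_le_of_le (hp : 1 ≤ p) (hx : 0 ≤ x) (hxy : x ≤ y) :
    (x + y) * ((x + y) ^ p - x ^ p - y ^ p) ≤ p * 2 ^ p * (x * y ^ p) := by
  have hy : 0 ≤ y := hx.trans hxy
  calc (x + y) * ((x + y) ^ p - x ^ p - y ^ p)
      ≤ (x + y) * ((x + y) ^ p - y ^ p) := by
        gcongr
        linarith [rpow_nonneg hx p]
    _ ≤ p * x * (x + y) ^ p := mul_rpow_add_sub_rpow_le hp hx hy
    _ ≤ p * x * (2 * y) ^ p := by gcongr; linarith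
    _ = p * 2 ^ p * (x * y ^ p) := by rw [mul_rpow zero_le_two hy]; ring

theorem mul_rpow_add_sub_rpow_sub_rpow_le (hp : 1 ≤ p) (hx : 0 ≤ x) (hy : 0 ≤ y) :
    (x + y) * ((x + y) ^ p - x ^ p - y ^ p) ≤ p * 2 ^ p * (x * y ^ p + x ^ p * y) := by
  have hcoef : 0 ≤ p * 2 ^ p := by positivity
  rcases le_total x y with hxy | hyx
  · have := mul_rpow_add_sub_rpow_sub_rpow_le_of_le hp hx hxy
    nlinarith [mul_nonneg (rpow_nonneg hx p) hy]
  · have := mul_rpow_add_sub_rpow_sub_rpow_le_of_le hp hy hyx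
    rw [add_comm y x] at this
    nlinarith [mul_nonneg hx (rpow_nonneg hy p)]

end Real

theorem exists_jbeta_const_general (β : ℝ) (hβ1 : 1 < β) :
    ∃ jβ : ℝ, 0 < jβ ∧ ∀ i j : ℕ, 1 ≤ i → 1 ≤ j →
      ((i : ℝ) + (j : ℝ)) * (((i : ℝ) + (j : ℝ)) ^ β - (i : ℝ) ^ β - (j : ℝ) ^ β)
        ≤ jβ * ((i : ℝ) * (j : ℝ) ^ β + (i : ℝ) ^ β * (j : ℝ)) := by
  have hβ : 0 < β := by linarith
  refine ⟨β * 2 ^ β, by positivity, fun i j _ _ => ?_⟩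
  exact Real.mul_rpow_add_sub_rpow_sub_rpow_le hβ1.le i.cast_nonneg j.cast_nonneg

/-- For every `β ∈ (1,2]` there exists a constant `ȷ_β > 0`, depending only on `β`,
such that `(i+j)((i+j)^β − i^β − j^β) ≤ ȷ_β (i j^β + i^β j)` for all positive
integers `i, j`. -/
theorem exists_jbeta_const (β : ℝ) (hβ1 : 1 < β) (hβ2 : β ≤ 2) :
    ∃ jβ : ℝ, 0 < jβ ∧ ∀ i j : ℕ, 1 ≤ i → 1 ≤ j →
      ((i : ℝ) + (j : ℝ)) * (((i : ℝ) + (j : ℝ)) ^ β - (i : ℝ) ^ β - (j : ℝ) ^ β)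
        ≤ jβ * ((i : ℝ) * (j : ℝ) ^ β + (i : ℝ) ^ β * (j : ℝ)) :=
  exists_jbeta_const_general β hβ1
end

section
/- Fix T ∈ (0,∞), β ∈ (1,2], and constants A > 0, α_0 > 0. Assume 0 ≤ a_{i,j} = a_{j,i} ≤ A(i+j), 0 ≤ p_{i,j} = p_{j,i} ≤ 1, and 0 ≤ N_{i,j}^s ≤ α_0. Suppose the zero-extended truncated solutions w^n (n ≥ 2) with common nonnegative initial data of first moment Λ_1 satisfy the uniform bounds |w_i^n(t)| ≤ W_i(T) for all n, all i ∈ ℕ, and all t ∈ [0,T]. Then for each i ∈ ℕ there is a constant Γ_i = A(V_i(T)/2 + W_i(T)(i+1)Λ_1 + 2α_0 Λ_1²), with V_i(T) = ∑_{j=1}^{i−1} i W_j(T) W_{i−j}(T), such that |w_i^n(t) − w_i^n(τ)| ≤ Γ_i (t − τ) for all n ≥ 2 and all 0 ≤ τ < t ≤ T; in particular, for each fixed i the family (w_i^n)_{n≥2} is equicontinuous on [0,T]. -/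
open Finset

/-- The paper's `Γᵢ(T)`, with `W` the uniform bounds `Wᵢ(T)`. -/
noncomputable def truncLipschitzConst (A α₀ Λ₁ : ℝ) (W : ℕ → ℝ) (i : ℕ) : ℝ :=
  A * ((∑ j ∈ Icc 1 (i-1), (i : ℝ) * W j * W (i-j)) / 2
    + W i * ((i : ℝ) + 1) * Λ₁ + 2 * α₀ * Λ₁ ^ 2)

noncomputable def coagGain (a p : ℕ → ℕ → ℝ) (i : ℕ) (w : ℕ → ℝ) : ℝ :=
  ∑ j ∈ Icc 1 (i-1), p j (i-j) * a j (i-j) * w j * w (i-j)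

noncomputable def coagLoss (a : ℕ → ℕ → ℝ) (n i : ℕ) (w : ℕ → ℝ) : ℝ :=
  ∑ j ∈ Icc 1 (n-i), a i j * w i * w j

noncomputable def breakageGain (a p : ℕ → ℕ → ℝ) (N : ℕ → ℕ → ℕ → ℝ) (n i : ℕ)
    (w : ℕ → ℝ) : ℝ :=
  ∑ j ∈ Icc (i+1) n, ∑ k ∈ Icc 1 (j-1),
    N (j-k) k i * (1 - p (j-k) k) * a (j-k) k * w (j-k) * w k

lemma truncRHS_eq (a p : ℕ → ℕ → ℝ) (N : ℕ → ℕ → ℕ → ℝ) (n i : ℕ) (w : ℕ → ℝ) :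
    truncRHS a p N n i w
      = coagGain a p i w / 2 - coagLoss a n i w + breakageGain a p N n i w / 2 := by
  unfold truncRHS coagGain coagLoss breakageGain
  ring

/-- Each pair `(j - k, k)` with `1 ≤ k < j ≤ n` is a distinct point of `[1, n]²`. -/
lemma sum_Icc_sum_Icc_sub_mul_le_sum_mul_sum {R : Type*} [CommSemiring R] [PartialOrder R]
    [IsOrderedRing R] {f g : ℕ → R} (n i : ℕ)
    (hf : ∀ m ∈ Icc 1 n, 0 ≤ f m) (hg : ∀ k ∈ Icc 1 n, 0 ≤ g k) :
    ∑ j ∈ Icc (i+1) n, ∑ k ∈ Icc 1 (j-1), f (j-k) * g k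
      ≤ (∑ m ∈ Icc 1 n, f m) * ∑ k ∈ Icc 1 n, g k := by
  set S := (Icc (i+1) n).sigma fun j => Icc 1 (j-1)
  have hinj : Set.InjOn (fun q : Σ _ : ℕ, ℕ => (q.1 - q.2, q.2)) S := by
    rintro ⟨j₁, k₁⟩ h₁ ⟨j₂, k₂⟩ h₂ h
    simp only [S, coe_sigma, Set.mem_sigma_iff, coe_Icc, Set.mem_Icc, Prod.mk.injEq] at h₁ h₂ h
    obtain ⟨hj, rfl⟩ := h
    obtain rfl : j₁ = j₂ := by omega
    rfl
  have hsub : S.image (fun q => (q.1 - q.2, q.2)) ⊆ Icc 1 n ×ˢ Icc 1 n := by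
    intro q hq
    obtain ⟨⟨j, k⟩, hjk, rfl⟩ := mem_image.1 hq
    simp only [S, mem_sigma, mem_Icc] at hjk
    simp only [mem_product, mem_Icc]
    omega
  rw [sum_sigma', sum_mul_sum, ← sum_product']
  calc ∑ q ∈ S, f (q.1 - q.2) * g q.2
      = ∑ q ∈ S.image (fun q => (q.1 - q.2, q.2)), f q.1 * g q.2 :=
        (sum_image (f := fun q : ℕ × ℕ => f q.1 * g q.2) hinj).symm
    _ ≤ ∑ q ∈ Icc 1 n ×ˢ Icc 1 n, f q.1 * g q.2 := by
      refine sum_le_sum_of_subset_of_nonneg hsub fun q hq _ => ?_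
      rw [mem_product] at hq
      exact mul_nonneg (hf _ hq.1) (hg _ hq.2)

lemma mul_mul_le_mul_mul {α : Type*} [Semiring α] [PartialOrder α] [IsOrderedRing α]
    {c C x X y Y : α} (hcC : c ≤ C) (hxX : x ≤ X) (hyY : y ≤ Y)
    (hc : 0 ≤ c) (hx : 0 ≤ x) (hy : 0 ≤ y) : c * x * y ≤ C * X * Y :=
  mul_le_mul_of_nonneg' (mul_le_mul_of_nonneg' hcC hxX hx (hc.trans hcC)) hyY hy
    (mul_nonneg (hc.trans hcC) (hx.trans hxX))

section TermBounds

variable {A α₀ Λ₁ : ℝ} {a p : ℕ → ℕ → ℝ} {N : ℕ → ℕ → ℕ → ℝ} {v W : ℕ → ℝ} {n i : ℕ}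

lemma coagGain_nonneg (ha : ∀ i j, 0 ≤ a i j) (hp : ∀ i j, 0 ≤ p i j)
    (hv : ∀ j, 1 ≤ j → 0 ≤ v j) : 0 ≤ coagGain a p i v := by
  refine sum_nonneg fun j hj => ?_
  rw [mem_Icc] at hj
  exact mul_nonneg (mul_nonneg (mul_nonneg (hp _ _) (ha _ _)) (hv j hj.1)) (hv (i-j) (by omega))

lemma coagGain_le (ha : ∀ i j, 0 ≤ a i j)
    (ha_bound : ∀ i j, 1 ≤ i → 1 ≤ j → a i j ≤ A * ((i : ℝ) + (j : ℝ)))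
    (hp : ∀ i j, 0 ≤ p i j) (hp_le : ∀ i j, p i j ≤ 1)
    (hv : ∀ j, 1 ≤ j → 0 ≤ v j) (hvW : ∀ j, 1 ≤ j → v j ≤ W j) :
    coagGain a p i v ≤ A * ∑ j ∈ Icc 1 (i-1), (i : ℝ) * W j * W (i-j) := by
  rw [mul_sum]
  refine sum_le_sum fun j hj => ?_
  rw [mem_Icc] at hj
  have hij : 1 ≤ i - j := by omega
  have ha' : a j (i-j) ≤ A * i := by
    simpa [Nat.cast_sub (by omega : j ≤ i)] using ha_bound j (i-j) hj.1 hij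
  have hpa : p j (i-j) * a j (i-j) ≤ A * i :=
    (mul_le_of_le_one_left (ha _ _) (hp_le _ _)).trans ha'
  calc p j (i-j) * a j (i-j) * v j * v (i-j) ≤ A * i * W j * W (i-j) :=
        mul_mul_le_mul_mul hpa (hvW j hj.1) (hvW (i-j) hij)
          (mul_nonneg (hp j (i-j)) (ha j (i-j))) (hv j hj.1) (hv (i-j) hij)
    _ = A * ((i : ℝ) * W j * W (i-j)) := by ring

lemma coagLoss_nonneg (ha : ∀ i j, 0 ≤ a i j) (hi : 1 ≤ i) (hv : ∀ j, 1 ≤ j → 0 ≤ v j) :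
    0 ≤ coagLoss a n i v :=
  sum_nonneg fun j hj => mul_nonneg (mul_nonneg (ha _ _) (hv i hi)) (hv j (mem_Icc.1 hj).1)

lemma coagLoss_le (hA : 0 ≤ A) (ha : ∀ i j, 0 ≤ a i j)
    (ha_bound : ∀ i j, 1 ≤ i → 1 ≤ j → a i j ≤ A * ((i : ℝ) + (j : ℝ))) (hi : 1 ≤ i)
    (hv : ∀ j, 1 ≤ j → 0 ≤ v j) (hvW : ∀ j, 1 ≤ j → v j ≤ W j)
    (hmass : ∑ j ∈ Icc 1 n, (j : ℝ) * v j ≤ Λ₁) :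
    coagLoss a n i v ≤ A * W i * ((i : ℝ) + 1) * Λ₁ := by
  have hWi : 0 ≤ W i := (hv i hi).trans (hvW i hi)
  have hmoment : ∑ j ∈ Icc 1 (n-i), (j : ℝ) * v j ≤ Λ₁ :=
    (sum_le_sum_of_subset_of_nonneg (Icc_subset_Icc_right (Nat.sub_le n i))
      fun j hj _ => mul_nonneg j.cast_nonneg (hv j (mem_Icc.1 hj).1)).trans hmass
  calc coagLoss a n i v
      ≤ ∑ j ∈ Icc 1 (n-i), A * W i * ((i : ℝ) + 1) * ((j : ℝ) * v j) := by
        refine sum_le_sum fun j hj => ?_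
        have hj : 1 ≤ j := (mem_Icc.1 hj).1
        have haij : a i j ≤ A * (((i : ℝ) + 1) * j) := by
          have hj' : (1 : ℝ) ≤ j := by exact_mod_cast hj
          have : (i : ℝ) + j ≤ ((i : ℝ) + 1) * j := by nlinarith [i.cast_nonneg (α := ℝ)]
          exact (ha_bound i j hi hj).trans (mul_le_mul_of_nonneg_left this hA)
        calc a i j * v i * v j ≤ A * (((i : ℝ) + 1) * j) * W i * v j :=
              mul_mul_le_mul_mul haij (hvW i hi) le_rfl (ha i j) (hv i hi) (hv j hj)
          _ = A * W i * ((i : ℝ) + 1) * ((j : ℝ) * v j) := by ring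
    _ = A * W i * ((i : ℝ) + 1) * ∑ j ∈ Icc 1 (n-i), (j : ℝ) * v j := by rw [mul_sum]
    _ ≤ A * W i * ((i : ℝ) + 1) * Λ₁ :=
        mul_le_mul_of_nonneg_left hmoment (mul_nonneg (mul_nonneg hA hWi) (by positivity))

lemma breakageGain_nonneg (ha : ∀ i j, 0 ≤ a i j) (hp_le : ∀ i j, p i j ≤ 1)
    (hN : ∀ i j s, 0 ≤ N i j s) (hv : ∀ j, 1 ≤ j → 0 ≤ v j) :
    0 ≤ breakageGain a p N n i v := by
  refine sum_nonneg fun j _ => sum_nonneg fun k hk => ?_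
  rw [mem_Icc] at hk
  exact mul_nonneg (mul_nonneg (mul_nonneg (mul_nonneg (hN _ _ _) (sub_nonneg.2 (hp_le _ _)))
    (ha _ _)) (hv (j-k) (by omega))) (hv k hk.1)

lemma breakageGain_le (hA : 0 ≤ A) (hα₀ : 0 ≤ α₀) (ha : ∀ i j, 0 ≤ a i j)
    (ha_bound : ∀ i j, 1 ≤ i → 1 ≤ j → a i j ≤ A * ((i : ℝ) + (j : ℝ)))
    (hp : ∀ i j, 0 ≤ p i j) (hp_le : ∀ i j, p i j ≤ 1) (hN : ∀ i j s, 0 ≤ N i j s)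
    (hN_bound : ∀ i j s, 1 ≤ i → 1 ≤ j → s ∈ Icc 1 (i+j-1) → N i j s ≤ α₀) (hi : 1 ≤ i)
    (hv : ∀ j, 1 ≤ j → 0 ≤ v j) (hmass : ∑ j ∈ Icc 1 n, (j : ℝ) * v j ≤ Λ₁) :
    breakageGain a p N n i v ≤ 2 * α₀ * A * Λ₁ ^ 2 := by
  have hmoment_nonneg : ∀ j ∈ Icc 1 n, 0 ≤ (j : ℝ) * v j :=
    fun j hj => mul_nonneg j.cast_nonneg (hv j (mem_Icc.1 hj).1)
  have hc : 0 ≤ 2 * α₀ * A := by positivity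
  calc breakageGain a p N n i v
      ≤ ∑ j ∈ Icc (i+1) n, ∑ k ∈ Icc 1 (j-1),
          2 * α₀ * A * (((j-k : ℕ) : ℝ) * v (j-k)) * ((k : ℝ) * v k) := by
        refine sum_le_sum fun j hj => sum_le_sum fun k hk => ?_
        rw [mem_Icc] at hj hk
        have hm : 1 ≤ j - k := by omega
        have hNp : N (j-k) k i * (1 - p (j-k) k) ≤ α₀ :=
          (mul_le_of_le_one_right (hN _ _ _) (by linarith [hp (j-k) k])).trans
            (hN_bound _ _ _ hm hk.1 (mem_Icc.2 ⟨hi, by omega⟩))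
        have ha' : a (j-k) k ≤ A * (2 * ((j-k : ℕ) : ℝ) * k) := by
          have hm' : (1 : ℝ) ≤ ((j-k : ℕ) : ℝ) := by exact_mod_cast hm
          have hk' : (1 : ℝ) ≤ k := by exact_mod_cast hk.1
          have : ((j-k : ℕ) : ℝ) + k ≤ 2 * ((j-k : ℕ) : ℝ) * k := by nlinarith
          exact (ha_bound _ _ hm hk.1).trans (mul_le_mul_of_nonneg_left this hA)
        calc N (j-k) k i * (1 - p (j-k) k) * a (j-k) k * v (j-k) * v k
            ≤ α₀ * (A * (2 * ((j-k : ℕ) : ℝ) * k)) * v (j-k) * v k :=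
              mul_mul_le_mul_mul (mul_le_mul_of_nonneg' hNp ha' (ha _ _) hα₀) le_rfl le_rfl
                (mul_nonneg (mul_nonneg (hN _ _ _) (sub_nonneg.2 (hp_le _ _))) (ha _ _))
                (hv _ hm) (hv k hk.1)
          _ = 2 * α₀ * A * (((j-k : ℕ) : ℝ) * v (j-k)) * ((k : ℝ) * v k) := by ring
    _ ≤ (∑ m ∈ Icc 1 n, 2 * α₀ * A * ((m : ℝ) * v m)) * ∑ k ∈ Icc 1 n, (k : ℝ) * v k :=
        sum_Icc_sum_Icc_sub_mul_le_sum_mul_sum n i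
          (fun m hm => mul_nonneg hc (hmoment_nonneg m hm)) hmoment_nonneg
    _ = 2 * α₀ * A * (∑ m ∈ Icc 1 n, (m : ℝ) * v m) ^ 2 := by rw [← mul_sum]; ring
    _ ≤ 2 * α₀ * A * Λ₁ ^ 2 := by
        gcongr
        exact sum_nonneg hmoment_nonneg

lemma abs_truncRHS_le (hA : 0 ≤ A) (hα₀ : 0 ≤ α₀) (ha : ∀ i j, 0 ≤ a i j)
    (ha_bound : ∀ i j, 1 ≤ i → 1 ≤ j → a i j ≤ A * ((i : ℝ) + (j : ℝ)))
    (hp : ∀ i j, 0 ≤ p i j) (hp_le : ∀ i j, p i j ≤ 1) (hN : ∀ i j s, 0 ≤ N i j s)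
    (hN_bound : ∀ i j s, 1 ≤ i → 1 ≤ j → s ∈ Icc 1 (i+j-1) → N i j s ≤ α₀) (hi : 1 ≤ i)
    (hv : ∀ j, 1 ≤ j → 0 ≤ v j) (hvW : ∀ j, 1 ≤ j → v j ≤ W j)
    (hmass : ∑ j ∈ Icc 1 n, (j : ℝ) * v j ≤ Λ₁) :
    |truncRHS a p N n i v| ≤ truncLipschitzConst A α₀ Λ₁ W i := by
  have hG₀ := coagGain_nonneg (i := i) ha hp hv
  have hG := coagGain_le (i := i) ha ha_bound hp hp_le hv hvW
  have hL₀ := coagLoss_nonneg (n := n) ha hi hv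
  have hL := coagLoss_le hA ha ha_bound hi hv hvW hmass
  have hB₀ := breakageGain_nonneg (n := n) (i := i) ha hp_le hN hv
  have hB := breakageGain_le hA hα₀ ha ha_bound hp hp_le hN hN_bound hi hv hmass
  rw [truncRHS_eq, abs_le, truncLipschitzConst]
  constructor <;> linarith

end TermBounds

theorem truncated_solutions_equicontinuous_general
    (T : ℝ)
    (A α₀ : ℝ) (hA : 0 < A) (hα₀ : 0 < α₀)
    (a p : ℕ → ℕ → ℝ) (N : ℕ → ℕ → ℕ → ℝ)
    (ha_nonneg : ∀ i j, 0 ≤ a i j)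
    (ha_bound : ∀ i j, 1 ≤ i → 1 ≤ j → a i j ≤ A * ((i : ℝ) + (j : ℝ)))
    (hp_nonneg : ∀ i j, 0 ≤ p i j)
    (hp_le : ∀ i j, p i j ≤ 1)
    (hN_nonneg : ∀ i j s, 0 ≤ N i j s)
    (hN_bound : ∀ i j s, 1 ≤ i → 1 ≤ j → s ∈ Finset.Icc 1 (i+j-1) → N i j s ≤ α₀)
    (Λ₁ : ℝ)
    (w : ℕ → ℕ → ℝ → ℝ)
    (hw_nonneg : ∀ n, 2 ≤ n → ∀ i ∈ Finset.Icc 1 n, ∀ t ∈ Set.Icc (0:ℝ) T, 0 ≤ w n i t)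
    (hw_ode : ∀ n, 2 ≤ n → ∀ i ∈ Finset.Icc 1 n, ∀ t ∈ Set.Icc (0:ℝ) T,
      HasDerivWithinAt (w n i) (truncRHS a p N n i (fun j => w n j t)) (Set.Icc 0 T) t)
    (hw_ext : ∀ n, 2 ≤ n → ∀ i, n < i → ∀ t : ℝ, w n i t = 0)
    (hw_mass : ∀ n, 2 ≤ n → ∀ t ∈ Set.Icc (0:ℝ) T,
      ∑ i ∈ Finset.Icc 1 n, (Nat.cast i : ℝ) * w n i t ≤ Λ₁)
    (W : ℕ → ℝ)
    (hW : ∀ n, 2 ≤ n → ∀ i, 1 ≤ i → ∀ t ∈ Set.Icc (0:ℝ) T, |w n i t| ≤ W i) :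
    ∀ n, 2 ≤ n → ∀ i, 1 ≤ i → ∀ τ t : ℝ, 0 ≤ τ → τ < t → t ≤ T →
      |w n i t - w n i τ|
        ≤ A * ((∑ j ∈ Finset.Icc 1 (i-1), (Nat.cast i : ℝ) * W j * W (i-j)) / 2
            + W i * ((i : ℝ) + 1) * Λ₁ + 2 * α₀ * Λ₁ ^ 2) * (t - τ) := by
  intro n hn i hi τ t hτ hτt htT
  have hstate_nonneg : ∀ s ∈ Set.Icc 0 T, ∀ j, 1 ≤ j → 0 ≤ w n j s := fun s hs j hj => by
    rcases le_or_gt j n with hjn | hnj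
    · exact hw_nonneg n hn j (mem_Icc.2 ⟨hj, hjn⟩) s hs
    · exact (hw_ext n hn j hnj s).ge
  have hderiv_le : ∀ s ∈ Set.Icc 0 T,
      ‖truncRHS a p N n i (fun j => w n j s)‖ ≤ truncLipschitzConst A α₀ Λ₁ W i :=
    fun s hs => abs_truncRHS_le hA.le hα₀.le ha_nonneg ha_bound hp_nonneg hp_le hN_nonneg
      hN_bound hi (hstate_nonneg s hs) (fun j hj => le_of_abs_le (hW n hn j hj s hs))
      (hw_mass n hn s hs)
  have hτ_mem : τ ∈ Set.Icc 0 T := ⟨hτ, hτt.le.trans htT⟩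
  have ht_mem : t ∈ Set.Icc 0 T := ⟨hτ.trans hτt.le, htT⟩
  rcases le_or_gt i n with hin | hni
  · have := (convex_Icc 0 T).norm_image_sub_le_of_norm_hasDerivWithin_le
      (fun s hs => hw_ode n hn i (mem_Icc.2 ⟨hi, hin⟩) s hs) hderiv_le hτ_mem ht_mem
    rwa [Real.norm_eq_abs, Real.norm_eq_abs, abs_of_pos (sub_pos.2 hτt)] at this
  · rw [hw_ext n hn i hni t, hw_ext n hn i hni τ, sub_self, abs_zero]
    exact mul_nonneg ((norm_nonneg _).trans (hderiv_le τ hτ_mem)) (sub_nonneg.2 hτt.le)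

/-- Time equicontinuity of the truncated solutions: under the uniform bounds
`|wᵢⁿ(t)| ≤ Wᵢ(T)` one has `|wᵢⁿ(t) − wᵢⁿ(τ)| ≤ Γᵢ (t − τ)` with
`Γᵢ = A (Vᵢ(T)/2 + Wᵢ(T)(i+1)Λ₁ + 2α₀Λ₁²)` and
`Vᵢ(T) = ∑_{j=1}^{i−1} i Wⱼ(T) W_{i−j}(T)`, uniformly in `n ≥ 2`. -/
theorem truncated_solutions_equicontinuous
    (T : ℝ) (hT : 0 < T) (β : ℝ) (hβ1 : 1 < β) (hβ2 : β ≤ 2)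
    (A α₀ : ℝ) (hA : 0 < A) (hα₀ : 0 < α₀)
    (a p : ℕ → ℕ → ℝ) (N : ℕ → ℕ → ℕ → ℝ)
    (ha_nonneg : ∀ i j, 0 ≤ a i j) (ha_symm : ∀ i j, a i j = a j i)
    (ha_bound : ∀ i j, 1 ≤ i → 1 ≤ j → a i j ≤ A * ((i : ℝ) + (j : ℝ)))
    (hp_nonneg : ∀ i j, 0 ≤ p i j) (hp_symm : ∀ i j, p i j = p j i)
    (hp_le : ∀ i j, p i j ≤ 1)
    (hN_nonneg : ∀ i j s, 0 ≤ N i j s) (hN_symm : ∀ i j s, N i j s = N j i s)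
    (hN_bound : ∀ i j s, 1 ≤ i → 1 ≤ j → s ∈ Finset.Icc 1 (i+j-1) → N i j s ≤ α₀)
    (hN_mass : ∀ i j, 1 ≤ i → 1 ≤ j →
      ∑ s ∈ Finset.Icc 1 (i+j-1), (Nat.cast s : ℝ) * N i j s = (i : ℝ) + (j : ℝ))
    (Λ₁ : ℝ) (hΛ₁ : 0 ≤ Λ₁)
    (w : ℕ → ℕ → ℝ → ℝ)
    (hw_nonneg : ∀ n, 2 ≤ n → ∀ i ∈ Finset.Icc 1 n, ∀ t ∈ Set.Icc (0:ℝ) T, 0 ≤ w n i t)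
    (hw_ode : ∀ n, 2 ≤ n → ∀ i ∈ Finset.Icc 1 n, ∀ t ∈ Set.Icc (0:ℝ) T,
      HasDerivWithinAt (w n i) (truncRHS a p N n i (fun j => w n j t)) (Set.Icc 0 T) t)
    (hw_ext : ∀ n, 2 ≤ n → ∀ i, n < i → ∀ t : ℝ, w n i t = 0)
    (hw_mass : ∀ n, 2 ≤ n → ∀ t ∈ Set.Icc (0:ℝ) T,
      ∑ i ∈ Finset.Icc 1 n, (Nat.cast i : ℝ) * w n i t ≤ Λ₁)
    (W : ℕ → ℝ)
    (hW : ∀ n, 2 ≤ n → ∀ i, 1 ≤ i → ∀ t ∈ Set.Icc (0:ℝ) T, |w n i t| ≤ W i) :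
    ∀ n, 2 ≤ n → ∀ i, 1 ≤ i → ∀ τ t : ℝ, 0 ≤ τ → τ < t → t ≤ T →
      |w n i t - w n i τ|
        ≤ A * ((∑ j ∈ Finset.Icc 1 (i-1), (Nat.cast i : ℝ) * W j * W (i-j)) / 2
            + W i * ((i : ℝ) + 1) * Λ₁ + 2 * α₀ * Λ₁ ^ 2) * (t - τ) :=
  truncated_solutions_equicontinuous_general T A α₀ hA hα₀ a p N ha_nonneg ha_bound hp_nonneg hp_le
    hN_nonneg hN_bound Λ₁ w hw_nonneg hw_ode hw_ext hw_mass W hW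
end
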